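/- arXiv:1602.05985 — 6 statements merged into one kernel-verified Lean document; each statement's English description precedes it below -/
import Mathlib

section
/- For any two elements R₁, R₂ of the even subalgebra Cl⁰(3), the element R₁·reverse(R₂) + R₂·reverse(R₁) is a scalar, i.e. it lies in the image of the algebra map ℝ → Cl(3). (Hence (R₁,R₂) := ½(R₁·reverse(R₂) + R₂·reverse(R₁)) defines a real-valued symmetric bilinear form on Cl⁰(3).) -/
noncomputable section

/-- The positive definite quadratic form `Q(v) = v₁² + v₂² + v₃²` on `ℝ³`. -/
def Q3 : QuadraticForm ℝ (Fin 3 → ℝ) :=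
  QuadraticMap.weightedSumSquares ℝ (fun _ : Fin 3 => (1 : ℝ))

/-!
Write `e₀, e₁, e₂` for the images of the standard basis vectors. Left multiplication by a vector
maps the span of `1, e₀e₁, e₀e₂, e₁e₂` into the span of `e₀, e₁, e₂, e₀e₁e₂` and back, so the even
subalgebra lies in the former span. Reversal fixes `1` and negates the three bivectors, so an even
element fixed by reversal is a scalar. Finally `x * reverse y + y * reverse x` is even and fixed by
reversal.
-/

open CliffordAlgebra

section General

variable {R M : Type*} [CommRing R] [AddCommGroup M] [Module R M] {Q : QuadraticForm R M}

theorem reverse_mul_reverse_add_mul_reverse (x y : CliffordAlgebra Q) :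
    reverse (x * reverse y + y * reverse x) = x * reverse y + y * reverse x := by
  rw [map_add, reverse.map_mul, reverse.map_mul, reverse_reverse, reverse_reverse, add_comm]

theorem reverse_mem_even {x : CliffordAlgebra Q} (hx : x ∈ even Q) : reverse x ∈ even Q := by
  rwa [← Subalgebra.mem_toSubmodule, even_toSubmodule, reverse_mem_evenOdd_iff,
    ← even_toSubmodule, Subalgebra.mem_toSubmodule]

theorem mul_reverse_add_mul_reverse_mem_even {x y : CliffordAlgebra Q}
    (hx : x ∈ even Q) (hy : y ∈ even Q) : x * reverse y + y * reverse x ∈ even Q :=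
  add_mem (mul_mem hx (reverse_mem_even hy)) (mul_mem hy (reverse_mem_even hx))

end General

namespace Cl3

def e (i : Fin 3) : CliffordAlgebra Q3 := ι Q3 (Pi.single i 1)

theorem e_mul_self (i : Fin 3) : e i * e i = 1 := by
  have : Q3 (Pi.single i 1) = 1 := by
    simp [Q3, QuadraticMap.weightedSumSquares_apply, Pi.single_apply]
  rw [e, ι_sq_scalar, this, map_one]

theorem e_mul_e_of_lt {i j : Fin 3} (h : i < j) : e j * e i = -(e i * e j) := by
  refine ι_mul_ι_comm_of_isOrtho ?_
  simp only [QuadraticMap.isOrtho_def, Q3, QuadraticMap.weightedSumSquares_apply,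
    Fin.sum_univ_three, Pi.add_apply, Pi.single_apply]
  fin_cases i <;> fin_cases j <;> simp_all

theorem e_mul_e_mul_of_lt {i j : Fin 3} (h : i < j) (x : CliffordAlgebra Q3) :
    e j * (e i * x) = -(e i * (e j * x)) := by
  rw [← mul_assoc, e_mul_e_of_lt h, neg_mul, mul_assoc]

theorem e_mul_e_mul_self (i : Fin 3) (x : CliffordAlgebra Q3) : e i * (e i * x) = x := by
  rw [← mul_assoc, e_mul_self, one_mul]

theorem reverse_e (i : Fin 3) : reverse (e i) = e i := reverse_ι _

theorem ι_eq_sum_smul_e (m : Fin 3 → ℝ) : ι Q3 m = m 0 • e 0 + m 1 • e 1 + m 2 • e 2 := by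
  conv_lhs => rw [pi_eq_sum_univ' m]
  simp [e, Fin.sum_univ_three]

def evenSpan : Submodule ℝ (CliffordAlgebra Q3) :=
  Submodule.span ℝ {1, e 0 * e 1, e 0 * e 2, e 1 * e 2}

def oddSpan : Submodule ℝ (CliffordAlgebra Q3) :=
  Submodule.span ℝ {e 0, e 1, e 2, e 0 * (e 1 * e 2)}

theorem ι_mul_mem_oddSpan (m : Fin 3 → ℝ) {x : CliffordAlgebra Q3} (hx : x ∈ evenSpan) :
    ι Q3 m * x ∈ oddSpan := by
  suffices evenSpan ≤ oddSpan.comap (LinearMap.mulLeft ℝ (ι Q3 m)) from this hx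
  rw [evenSpan, oddSpan, Submodule.span_le]
  simp only [Set.insert_subset_iff, Set.singleton_subset_iff, SetLike.mem_coe,
    Submodule.mem_comap, LinearMap.mulLeft_apply, ι_eq_sum_smul_e, add_mul, smul_mul_assoc]
  refine ⟨?_, ?_, ?_, ?_⟩ <;>
    simp only [e_mul_e_mul_self, e_mul_e_mul_of_lt, e_mul_self, e_mul_e_of_lt, mul_one, mul_neg,
      smul_neg, Fin.reduceLT] <;>
    repeat' first
      | apply add_mem | apply neg_mem | apply Submodule.smul_mem
      | exact Submodule.subset_span (by simp)

theorem ι_mul_mem_evenSpan (m : Fin 3 → ℝ) {x : CliffordAlgebra Q3} (hx : x ∈ oddSpan) :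
    ι Q3 m * x ∈ evenSpan := by
  suffices oddSpan ≤ evenSpan.comap (LinearMap.mulLeft ℝ (ι Q3 m)) from this hx
  rw [oddSpan, evenSpan, Submodule.span_le]
  simp only [Set.insert_subset_iff, Set.singleton_subset_iff, SetLike.mem_coe,
    Submodule.mem_comap, LinearMap.mulLeft_apply, ι_eq_sum_smul_e, add_mul, smul_mul_assoc]
  refine ⟨?_, ?_, ?_, ?_⟩ <;>
    simp only [e_mul_e_mul_self, e_mul_e_mul_of_lt, e_mul_self, e_mul_e_of_lt, mul_one, mul_neg,
      smul_neg, Fin.reduceLT] <;>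
    repeat' first
      | apply add_mem | apply neg_mem | apply Submodule.smul_mem
      | exact Submodule.subset_span (by simp)

theorem mem_evenSpan_of_mem_even {x : CliffordAlgebra Q3} (hx : x ∈ even Q3) : x ∈ evenSpan := by
  rw [← Subalgebra.mem_toSubmodule, even_toSubmodule] at hx
  induction x, hx using even_induction with
  | algebraMap r =>
    rw [Algebra.algebraMap_eq_smul_one]
    exact evenSpan.smul_mem r (Submodule.subset_span (by simp))
  | add x y _ _ hx hy => exact add_mem hx hy
  | ι_mul_ι_mul m₁ m₂ x _ hx =>
    rw [mul_assoc]
    exact ι_mul_mem_evenSpan m₁ (ι_mul_mem_oddSpan m₂ hx)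

theorem add_reverse_mem_one_of_mem_evenSpan {x : CliffordAlgebra Q3} (hx : x ∈ evenSpan) :
    x + reverse x ∈ (1 : Submodule ℝ (CliffordAlgebra Q3)) := by
  suffices evenSpan ≤ (1 : Submodule ℝ _).comap (LinearMap.id + reverse) from this hx
  rw [evenSpan, Submodule.span_le]
  simp only [Set.insert_subset_iff, Set.singleton_subset_iff, SetLike.mem_coe,
    Submodule.mem_comap, LinearMap.add_apply, LinearMap.id_apply, reverse.map_one,
    reverse.map_mul, reverse_e, e_mul_e_of_lt, Fin.reduceLT, add_neg_cancel]
  have one_mem : (1 : CliffordAlgebra Q3) ∈ (1 : Submodule ℝ _) := Submodule.one_le.1 le_rfl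
  exact ⟨add_mem one_mem one_mem, zero_mem _, zero_mem _, zero_mem _⟩

theorem mem_one_of_mem_even_of_reverse_eq {x : CliffordAlgebra Q3} (hx : x ∈ even Q3)
    (hrev : reverse x = x) : x ∈ (1 : Submodule ℝ (CliffordAlgebra Q3)) := by
  have h := add_reverse_mem_one_of_mem_evenSpan (mem_evenSpan_of_mem_even hx)
  rwa [hrev, ← two_smul ℝ, Submodule.smul_mem_iff _ two_ne_zero] at h

end Cl3

/-- For any two elements `R₁, R₂` of the even subalgebra `Cl⁰(3)`, the element
`R₁ · reverse R₂ + R₂ · reverse R₁` is a scalar, i.e. lies in the image of `ℝ → Cl(3)`. -/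
theorem even_mul_reverse_add_is_scalar (R₁ R₂ : CliffordAlgebra.even Q3) :
    ∃ c : ℝ,
      (R₁ : CliffordAlgebra Q3) * CliffordAlgebra.reverse (R₂ : CliffordAlgebra Q3) +
        (R₂ : CliffordAlgebra Q3) * CliffordAlgebra.reverse (R₁ : CliffordAlgebra Q3) =
      algebraMap ℝ (CliffordAlgebra Q3) c := by
  obtain ⟨c, hc⟩ := Submodule.mem_one.1 <| Cl3.mem_one_of_mem_even_of_reverse_eq
    (mul_reverse_add_mul_reverse_mem_even R₁.2 R₂.2) (reverse_mul_reverse_add_mul_reverse _ _)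
  exact ⟨c, hc.symm⟩
end
end

section
/- For quaternions q, r ∈ ℍ with ‖q‖ = 1, one has −(q · star(r) · q) = r − 2⟪r,q⟫·q; that is, the reflection of r in the hyperplane orthogonal to q is realized by the quaternionic sandwiching −q·star(r)·q. -/
open Quaternion RealInnerProductSpace

namespace Quaternion

theorem mul_star_add_mul_star_eq_two_inner (q r : ℍ[ℝ]) :
    q * star r + r * star q = ((2 * ⟪r, q⟫ : ℝ) : ℍ[ℝ]) := by
  have hstar : q * star r = star (r * star q) := by rw [star_mul, star_star]
  rw [hstar, add_comm, self_add_star, inner_def]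
  push_cast
  rfl

theorem mul_star_mul_eq (q r : ℍ[ℝ]) :
    q * star r * q = (2 * ⟪r, q⟫) • q - (‖q‖ ^ 2) • r := by
  have hsum := mul_star_add_mul_star_eq_two_inner q r
  calc q * star r * q = (((2 * ⟪r, q⟫ : ℝ) : ℍ[ℝ]) - r * star q) * q := by
        rw [← hsum, add_sub_cancel_right]
    _ = (2 * ⟪r, q⟫) • q - r * (star q * q) := by
        rw [sub_mul, mul_assoc, coe_mul_eq_smul]
    _ = (2 * ⟪r, q⟫) • q - (‖q‖ ^ 2) • r := by
        rw [star_mul_self, normSq_eq_norm_mul_self, ← sq, mul_coe_eq_smul]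

end Quaternion

/-- For quaternions `q, r` with `‖q‖ = 1`, the reflection of `r` in the hyperplane orthogonal
to `q` is realized by the quaternionic sandwiching `−q·star(r)·q`. -/
theorem quaternion_sandwich_is_reflection (q r : ℍ[ℝ]) (hq : ‖q‖ = 1) :
    -(q * star r * q) = r - (2 * ⟪r, q⟫) • q := by
  rw [mul_star_mul_eq, hq, one_pow, one_smul, neg_sub]
end

section
/- (Induction Theorem.) Let G be a finite subgroup of the unit group ℍˣ all of whose elements have norm 1 and with −1 ∈ G, and let Φ ⊂ ℍ be the underlying set of G. Then Φ satisfies the axioms of a root system in Euclidean ℝ⁴ ≅ ℍ: (i) for every q ∈ Φ and c ∈ ℝ, if c·q ∈ Φ then c = 1 or c = −1; (ii) for all q, r ∈ Φ, the reflection r − 2⟪r,q⟫·q belongs to Φ. -/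
open Quaternion RealInnerProductSpace

/-
Both axioms come from the norm. A real multiple `c • q` of a unit quaternion has norm `|c|`, so it
is a unit only for `c = ±1`. For the reflections, `2⟪r, q⟫ = r q̄ + q r̄` gives, when `|q| = 1`,
`r - 2⟪r, q⟫ q = -(q r̄ q)`, and `r̄ = r⁻¹` for a unit quaternion; so the reflection of `r` in `q`
is `(-1) · q r⁻¹ q`, again an element of `G`.
-/

theorem eq_one_or_eq_neg_one_of_norm_smul {E : Type*} [NormedAddCommGroup E] [NormedSpace ℝ E]
    {q : E} (hq : ‖q‖ = 1) {c : ℝ} (hcq : ‖c • q‖ = 1) : c = 1 ∨ c = -1 := by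
  rw [norm_smul, hq, mul_one, Real.norm_eq_abs] at hcq
  exact abs_eq zero_le_one |>.mp hcq

namespace Quaternion

theorem coe_two_mul_inner (q r : ℍ) : ((2 * ⟪r, q⟫ : ℝ) : ℍ) = r * star q + q * star r := by
  rw [inner_def, ← self_add_star', star_mul, star_star]

theorem normSq_smul_sub_two_mul_inner_smul (q r : ℍ) :
    normSq q • r - (2 * ⟪r, q⟫) • q = -(q * star r * q) := by
  rw [← coe_mul_eq_smul, ← coe_mul_eq_smul, coe_two_mul_inner, add_mul, mul_assoc r,
    star_mul_self, ← coe_commutes]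
  abel

theorem sub_two_mul_inner_smul_of_norm_eq_one {q : ℍ} (hq : ‖q‖ = 1) (r : ℍ) :
    r - (2 * ⟪r, q⟫) • q = -(q * star r * q) := by
  rw [← normSq_smul_sub_two_mul_inner_smul, normSq_eq_norm_mul_self, hq, mul_one, one_smul]

theorem star_eq_inv_of_norm_eq_one {q : ℍ} (hq : ‖q‖ = 1) : star q = q⁻¹ := by
  rw [inv_def, normSq_eq_norm_mul_self, hq, mul_one, inv_one, one_smul]

end Quaternion

theorem induction_theorem_general (G : Subgroup (ℍ[ℝ])ˣ)
    (hnorm : ∀ g ∈ G, ‖((g : (ℍ[ℝ])ˣ) : ℍ[ℝ])‖ = 1) (hneg : (-1 : (ℍ[ℝ])ˣ) ∈ G)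
    (Φ : Set ℍ[ℝ]) (hΦ : Φ = (fun u : (ℍ[ℝ])ˣ => (u : ℍ[ℝ])) '' G) :
    (∀ q ∈ Φ, ∀ c : ℝ, c • q ∈ Φ → c = 1 ∨ c = -1) ∧
    (∀ q ∈ Φ, ∀ r ∈ Φ, r - (2 * ⟪r, q⟫) • q ∈ Φ) := by
  subst hΦ
  constructor
  · rintro _ ⟨u, hu, rfl⟩ c ⟨v, hv, hvu⟩
    exact eq_one_or_eq_neg_one_of_norm_smul (hnorm u hu) (hvu ▸ hnorm v hv)
  · rintro _ ⟨u, hu, rfl⟩ _ ⟨v, hv, rfl⟩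
    refine ⟨-1 * (u * (v⁻¹ * u)), G.mul_mem hneg (G.mul_mem hu (G.mul_mem (G.inv_mem hv) hu)), ?_⟩
    rw [sub_two_mul_inner_smul_of_norm_eq_one (hnorm u hu), star_eq_inv_of_norm_eq_one (hnorm v hv)]
    simp [Units.val_inv_eq_inv_val, mul_assoc]

/-- **Induction Theorem.** If `G` is a finite subgroup of `ℍˣ` all of whose elements have
norm 1 with `-1 ∈ G`, then its underlying set `Φ ⊂ ℍ ≅ ℝ⁴` satisfies the axioms of a root
system: (i) the only real multiples of a root `q` appearing in `Φ` are `±q`;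
(ii) `Φ` is closed under the reflections `r ↦ r − 2⟪r,q⟫·q` for `q ∈ Φ`. -/
theorem induction_theorem (G : Subgroup (ℍ[ℝ])ˣ) (hfin : (G : Set (ℍ[ℝ])ˣ).Finite)
    (hnorm : ∀ g ∈ G, ‖((g : (ℍ[ℝ])ˣ) : ℍ[ℝ])‖ = 1) (hneg : (-1 : (ℍ[ℝ])ˣ) ∈ G)
    (Φ : Set ℍ[ℝ]) (hΦ : Φ = (fun u : (ℍ[ℝ])ˣ => (u : ℍ[ℝ])) '' G) :
    (∀ q ∈ Φ, ∀ c : ℝ, c • q ∈ Φ → c = 1 ∨ c = -1) ∧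
    (∀ q ∈ Φ, ∀ r ∈ Φ, r - (2 * ⟪r, q⟫) • q ∈ Φ) :=
  induction_theorem_general G hnorm hneg Φ hΦ
end

section
/- The subgroup G of ℍˣ generated by the two spinors a₁a₂ and a₂a₃ has exactly 120 elements (it is the binary icosahedral group 2I, the double cover of the chiral icosahedral rotation group of order 60). -/
/-!
The elements of `2I` have coordinates in `½ℤ[τ] ⊆ ¼ℤ[√5]`, so `4 • 2I` lies in `ℍ[ℤ√5]`, where
arithmetic is exact and equality decidable. There the kernel enumerates the orbit of `1` under
right multiplication by the two generators: it finds `120` distinct elements, each a product of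
generators, and a set that right multiplication by either generator maps into itself. Since right
multiplication is injective, it permutes this finite set, which is therefore also stable under the
inverses of the generators, hence contains the whole group they generate.
-/

noncomputable section

open Quaternion

/-- The golden ratio `τ = (1+√5)/2`. -/
def τ : ℝ := (1 + Real.sqrt 5) / 2

/-- The simple root `a₁ = j` of `H₃`, as a pure unit quaternion. -/
def a₁ : ℍ[ℝ] := ⟨0, 0, 1, 0⟩

/-- The simple root `a₂ = -½((τ-1)i + j + τk)` of `H₃`, as a pure unit quaternion. -/
def a₂ : ℍ[ℝ] := ⟨0, -((τ - 1) / 2), -(1 / 2), -(τ / 2)⟩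

/-- The simple root `a₃ = k` of `H₃`, as a pure unit quaternion. -/
def a₃ : ℍ[ℝ] := ⟨0, 0, 0, 1⟩

/-- The subgroup of `ℍˣ` generated by the two spinors `a₁a₂` and `a₂a₃`
(the binary icosahedral group `2I`). -/
def G2I : Subgroup (ℍ[ℝ])ˣ :=
  Subgroup.closure {u : (ℍ[ℝ])ˣ | (u : ℍ[ℝ]) = a₁ * a₂ ∨ (u : ℍ[ℝ]) = a₂ * a₃}

section OrbitSearch

variable {α β : Type*} [DecidableEq α] (act : α → β → α) (gs : List β)

/-- Worklist search: `seen` holds the elements found so far, `queue` those whose images under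
`act · g` (for `g ∈ gs`) are still to be explored; the natural number is fuel. -/
def orbitSearch : ℕ → List α → List α → List α
  | 0, seen, _ => seen
  | _ + 1, seen, [] => seen
  | n + 1, seen, a :: queue =>
    let new := ((gs.map (act a)).filter (· ∉ seen)).dedup
    orbitSearch n (seen ++ new) (queue ++ new)

theorem subset_orbitSearch (n : ℕ) (seen queue : List α) :
    seen ⊆ orbitSearch act gs n seen queue := by
  induction n generalizing seen queue with
  | zero => exact List.Subset.refl _
  | succ n ih =>
    cases queue with
    | nil => exact List.Subset.refl _
    | cons a queue => exact List.Subset.trans (List.subset_append_left _ _) (ih _ _)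

theorem nodup_orbitSearch (n : ℕ) (seen queue : List α) (h : seen.Nodup) :
    (orbitSearch act gs n seen queue).Nodup := by
  induction n generalizing seen queue with
  | zero => exact h
  | succ n ih =>
    cases queue with
    | nil => exact h
    | cons a queue =>
      refine ih _ _ (h.append (List.nodup_dedup _) fun x hx hx' => ?_)
      simpa [hx] using List.mem_dedup.1 hx'

theorem orbitSearch_induction (p : α → Prop) (n : ℕ) (seen queue : List α)
    (hseen : ∀ a ∈ seen, p a) (hqueue : queue ⊆ seen)
    (hact : ∀ a ∈ orbitSearch act gs n seen queue, p a → ∀ g ∈ gs, p (act a g)) :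
    ∀ a ∈ orbitSearch act gs n seen queue, p a := by
  induction n generalizing seen queue with
  | zero => exact hseen
  | succ n ih =>
    cases queue with
    | nil => exact hseen
    | cons a queue =>
      have ha : a ∈ seen := hqueue List.mem_cons_self
      refine ih _ _ ?_ ?_ hact
      · intro b hb
        rcases List.mem_append.1 hb with hb | hb
        · exact hseen b hb
        · obtain ⟨g, hg, rfl⟩ := List.mem_map.1 (List.mem_filter.1 (List.mem_dedup.1 hb)).1
          exact hact a (subset_orbitSearch act gs _ _ _ ha) (hseen a ha) g hg
      · exact List.append_subset.2
          ⟨fun b hb => List.mem_append_left _ (hqueue (List.mem_cons_of_mem _ hb)),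
            List.subset_append_right _ _⟩

end OrbitSearch

theorem Units.image_val_closure_eq {M : Type*} [Monoid M] {S : Set Mˣ} {s : Set M}
    (hs : s.Finite) (h1 : 1 ∈ s) (hmul : ∀ a ∈ s, ∀ g ∈ S, a * ↑g ∈ s)
    (hsub : s ⊆ Submonoid.closure (Units.val '' S)) :
    Units.val '' (Subgroup.closure S : Set Mˣ) = s := by
  set t : Set Mˣ := Units.val ⁻¹' s
  have ht : t.Finite := hs.preimage Units.val_injective.injOn
  have hmul_inv (a : Mˣ) (ha : a ∈ t) (g : Mˣ) (hg : g ∈ S) : a * g⁻¹ ∈ t := by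
    have hsurj : Set.SurjOn (· * g) t t :=
      ((ht.injOn_iff_bijOn_of_mapsTo fun b hb => hmul _ hb g hg).1
        (mul_left_injective g).injOn).surjOn
    obtain ⟨b, hb, rfl⟩ := hsurj ha
    simpa using hb
  apply subset_antisymm
  · rintro _ ⟨a, ha, rfl⟩
    induction ha using Subgroup.closure_induction_right with
    | one => exact h1
    | mul_right a _ g hg ha => exact hmul _ ha g hg
    | mul_inv_cancel a _ g hg ha => exact hmul_inv a ha g hg
  · have hle : Submonoid.closure (Units.val '' S) ≤
        (Subgroup.closure S).toSubmonoid.map (Units.coeHom M) := by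
      rw [Submonoid.closure_le]
      rintro _ ⟨g, hg, rfl⟩
      exact ⟨g, Subgroup.subset_closure hg, rfl⟩
    exact hsub.trans hle

def sqrtFiveEmbedding : ℤ√5 →+* ℝ :=
  Zsqrtd.lift ⟨Real.sqrt 5, by norm_num⟩

@[simp] theorem sqrtFiveEmbedding_apply (z : ℤ√5) :
    sqrtFiveEmbedding z = z.re + z.im * Real.sqrt 5 := by
  simp [sqrtFiveEmbedding]

theorem sqrtFiveEmbedding_injective : Function.Injective sqrtFiveEmbedding :=
  Zsqrtd.lift_injective _ fun n h => by
    have : n ≤ 2 := by nlinarith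
    have : -2 ≤ n := by nlinarith
    interval_cases n <;> omega

namespace Quaternion

variable {R S : Type*} [CommRing R] [CommRing S]

instance [DecidableEq R] : DecidableEq ℍ[R] := fun p q =>
  decidable_of_iff (p.re = q.re ∧ p.imI = q.imI ∧ p.imJ = q.imJ ∧ p.imK = q.imK)
    QuaternionAlgebra.ext_iff.symm

def map (f : R →+* S) (q : ℍ[R]) : ℍ[S] := ⟨f q.re, f q.imI, f q.imJ, f q.imK⟩

@[simp] theorem re_map (f : R →+* S) (q : ℍ[R]) : (map f q).re = f q.re := rfl
@[simp] theorem imI_map (f : R →+* S) (q : ℍ[R]) : (map f q).imI = f q.imI := rfl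
@[simp] theorem imJ_map (f : R →+* S) (q : ℍ[R]) : (map f q).imJ = f q.imJ := rfl
@[simp] theorem imK_map (f : R →+* S) (q : ℍ[R]) : (map f q).imK = f q.imK := rfl

def mapRingHom (f : R →+* S) : ℍ[R] →+* ℍ[S] where
  toFun := map f
  map_one' := by ext <;> simp
  map_mul' p q := by ext <;> simp [re_mul, imI_mul, imJ_mul, imK_mul]
  map_zero' := by ext <;> simp
  map_add' p q := by ext <;> simp

theorem mapRingHom_injective {f : R →+* S} (hf : Function.Injective f) :
    Function.Injective (mapRingHom f) := fun p q h => by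
  ext
  · exact hf (congrArg QuaternionAlgebra.re h)
  · exact hf (congrArg QuaternionAlgebra.imI h)
  · exact hf (congrArg QuaternionAlgebra.imJ h)
  · exact hf (congrArg QuaternionAlgebra.imK h)

end Quaternion

/-- `P` encodes the real quaternion `P / 4`. -/
def toQuat (P : ℍ[ℤ√5]) : ℍ[ℝ] := (4 : ℝ)⁻¹ • Quaternion.mapRingHom sqrtFiveEmbedding P

theorem re_toQuat (P : ℍ[ℤ√5]) : (toQuat P).re = (4 : ℝ)⁻¹ * sqrtFiveEmbedding P.re := rfl
theorem imI_toQuat (P : ℍ[ℤ√5]) : (toQuat P).imI = (4 : ℝ)⁻¹ * sqrtFiveEmbedding P.imI := rfl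
theorem imJ_toQuat (P : ℍ[ℤ√5]) : (toQuat P).imJ = (4 : ℝ)⁻¹ * sqrtFiveEmbedding P.imJ := rfl
theorem imK_toQuat (P : ℍ[ℤ√5]) : (toQuat P).imK = (4 : ℝ)⁻¹ * sqrtFiveEmbedding P.imK := rfl

theorem toQuat_injective : Function.Injective toQuat := fun _ _ h =>
  Quaternion.mapRingHom_injective sqrtFiveEmbedding_injective
    (smul_right_injective _ (by norm_num) h)

theorem toQuat_zero : toQuat 0 = 0 := by
  rw [toQuat, map_zero, smul_zero]

theorem toQuat_four : toQuat 4 = 1 := by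
  rw [toQuat, map_ofNat, ← map_ofNat (algebraMap ℝ ℍ[ℝ]) 4, Algebra.algebraMap_eq_smul_one,
    smul_smul]
  norm_num

theorem toQuat_mul_of_eq {P Q R : ℍ[ℤ√5]} (h : P * Q = 4 * R) :
    toQuat P * toQuat Q = toQuat R := by
  rw [toQuat, toQuat, toQuat, smul_mul_smul_comm, ← map_mul, h, map_mul, map_ofNat,
    ← map_ofNat (algebraMap ℝ ℍ[ℝ]) 4, ← Algebra.smul_def, smul_smul]
  norm_num

/-- Coordinatewise truncating division by `4`; `mul_spinor_eq_four_mul_quarter` checks that it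
is exact wherever it is used. -/
def quarter (P : ℍ[ℤ√5]) : ℍ[ℤ√5] :=
  let q (z : ℤ√5) : ℤ√5 := ⟨z.re / 4, z.im / 4⟩
  ⟨q P.re, q P.imI, q P.imJ, q P.imK⟩

def spinor₁₂ : ℍ[ℤ√5] := ⟨⟨2, 0⟩, ⟨-1, -1⟩, 0, ⟨-1, 1⟩⟩

def spinor₂₃ : ℍ[ℤ√5] := ⟨⟨1, 1⟩, ⟨-2, 0⟩, ⟨-1, 1⟩, 0⟩

theorem toQuat_spinor₁₂ : toQuat spinor₁₂ = a₁ * a₂ := by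
  ext <;> simp only [re_mul, imI_mul, imJ_mul, imK_mul, re_toQuat, imI_toQuat, imJ_toQuat,
    imK_toQuat] <;> simp [spinor₁₂, a₁, a₂, τ] <;> ring

theorem toQuat_spinor₂₃ : toQuat spinor₂₃ = a₂ * a₃ := by
  ext <;> simp only [re_mul, imI_mul, imJ_mul, imK_mul, re_toQuat, imI_toQuat, imJ_toQuat,
    imK_toQuat] <;> simp [spinor₂₃, a₂, a₃, τ] <;> ring

/-- Irreducible so that only the kernel, through `decide +kernel`, ever evaluates the search. -/
@[irreducible] def unitIcosians : List ℍ[ℤ√5] :=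
  orbitSearch (fun P g => quarter (P * g)) [spinor₁₂, spinor₂₃] 120 [4] [4]

theorem four_mem_unitIcosians : 4 ∈ unitIcosians := by
  unfold unitIcosians
  exact subset_orbitSearch _ _ _ _ _ (List.mem_singleton_self _)

theorem nodup_unitIcosians : unitIcosians.Nodup := by
  unfold unitIcosians
  exact nodup_orbitSearch _ _ _ _ _ (List.nodup_singleton _)

theorem unitIcosians_induction (p : ℍ[ℤ√5] → Prop) (h4 : p 4)
    (hstep : ∀ P ∈ unitIcosians, p P → ∀ g ∈ [spinor₁₂, spinor₂₃], p (quarter (P * g))) :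
    ∀ P ∈ unitIcosians, p P := by
  unfold unitIcosians at hstep ⊢
  exact orbitSearch_induction _ _ p _ _ _ (by simpa using h4) (List.Subset.refl _) hstep

theorem length_unitIcosians : unitIcosians.length = 120 := by
  decide +kernel

theorem mul_spinor_eq_four_mul_quarter : ∀ P ∈ unitIcosians, ∀ g ∈ [spinor₁₂, spinor₂₃],
    P * g = 4 * quarter (P * g) ∧ quarter (P * g) ∈ unitIcosians := by
  decide +kernel

theorem toQuat_mul_spinor {P g : ℍ[ℤ√5]} (hP : P ∈ unitIcosians)
    (hg : g ∈ [spinor₁₂, spinor₂₃]) :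
    quarter (P * g) ∈ unitIcosians ∧ toQuat P * toQuat g = toQuat (quarter (P * g)) :=
  ⟨(mul_spinor_eq_four_mul_quarter P hP g hg).2,
    toQuat_mul_of_eq (mul_spinor_eq_four_mul_quarter P hP g hg).1⟩

theorem image_val_G2I :
    Units.val '' (G2I : Set ℍ[ℝ]ˣ) = toQuat '' {P | P ∈ unitIcosians} := by
  have h₁₂ : a₁ * a₂ ≠ 0 := by
    rw [← toQuat_spinor₁₂, ← toQuat_zero]; exact toQuat_injective.ne (by decide)
  have h₂₃ : a₂ * a₃ ≠ 0 := by
    rw [← toQuat_spinor₂₃, ← toQuat_zero]; exact toQuat_injective.ne (by decide)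
  apply Units.image_val_closure_eq ((List.finite_toSet _).image _)
  · exact ⟨4, four_mem_unitIcosians, toQuat_four⟩
  · rintro _ ⟨P, hP, rfl⟩ g (hg | hg) <;> rw [hg]
    · obtain ⟨hmem, heq⟩ := toQuat_mul_spinor hP List.mem_cons_self
      exact ⟨_, hmem, by rw [← heq, toQuat_spinor₁₂]⟩
    · obtain ⟨hmem, heq⟩ := toQuat_mul_spinor hP (List.mem_cons_of_mem _ List.mem_cons_self)
      exact ⟨_, hmem, by rw [← heq, toQuat_spinor₂₃]⟩
  · rintro _ ⟨P, hP, rfl⟩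
    refine unitIcosians_induction (fun P => toQuat P ∈ Submonoid.closure _) ?_ ?_ P hP
    · rw [toQuat_four]
      exact one_mem _
    · intro Q hQ hmem g hg
      rw [← (toQuat_mul_spinor hQ hg).2]
      refine mul_mem hmem (Submonoid.subset_closure ?_)
      rcases List.mem_pair.1 hg with rfl | rfl
      · exact ⟨Units.mk0 _ h₁₂, Or.inl rfl, toQuat_spinor₁₂.symm⟩
      · exact ⟨Units.mk0 _ h₂₃, Or.inr rfl, toQuat_spinor₂₃.symm⟩

/-- The binary icosahedral group `2I`, the subgroup of `ℍˣ` generated by the spinors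
`a₁a₂` and `a₂a₃`, has exactly 120 elements. -/
theorem card_binary_icosahedral : Nat.card G2I = 120 := by
  calc Nat.card G2I = Nat.card (Units.val '' (G2I : Set ℍ[ℝ]ˣ)) :=
        (Nat.card_image_of_injective Units.val_injective _).symm
    _ = Nat.card {P | P ∈ unitIcosians} := by
        rw [image_val_G2I, Nat.card_image_of_injective toQuat_injective]
    _ = 120 := by
        rw [← length_unitIcosians, ← List.toFinset_card_of_nodup nodup_unitIcosians,
          Nat.card_coe_set_eq, ← List.coe_toFinset, Set.ncard_coe_finset]
end
end

section
/- The subgroup of the group of linear isometries of Euclidean ℝ³ generated by the three reflections in the hyperplanes orthogonal to r₁ = (0,1,0), r₂ = −½(τ−1, 1, τ), r₃ = (0,0,1) has order 120 (it is the full icosahedral group, the Coxeter group H₃ ≅ A₅ × ℤ₂). -/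
/-! In the basis of simple roots `r₁, r₂, r₃` the reflection `sᵢ` sends `rⱼ ↦ rⱼ − Aᵢⱼ rᵢ`, where
`A` is the Cartan matrix of `H₃`, with entries `2, −1, 0, −τ` in `ℤ[τ]`. Since `τ` is irrational,
`ℤ[τ]` embeds into `ℝ`, so the group is isomorphic to the monoid of matrices over `ℤ[τ]` generated
by the three matrices `1 − Eᵢᵢ A` (reflections are involutions, so monoid and group closure agree).
That monoid is enumerated by a breadth-first search run in the kernel: no new element appears after
word length 15, the length of the longest element, and 120 have been found by then. -/

noncomputable section

open RealInnerProductSpace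

/-- The simple roots `r₁ = (0,1,0)`, `r₂ = −½(τ−1, 1, τ)`, `r₃ = (0,0,1)` of `H₃`
in Euclidean `ℝ³`. -/
def r : Fin 3 → EuclideanSpace ℝ (Fin 3) :=
  ![!₂[0, 1, 0], !₂[-((τ - 1) / 2), -(1 / 2), -(τ / 2)], !₂[0, 0, 1]]

/-- The subgroup of the group of linear isometries of `ℝ³` generated by the three
reflections `λ ↦ λ − 2(λ|rᵢ)/(rᵢ|rᵢ)·rᵢ` in the hyperplanes orthogonal to `r₁, r₂, r₃`. -/
def IcosGroup : Subgroup (EuclideanSpace ℝ (Fin 3) ≃ₗᵢ[ℝ] EuclideanSpace ℝ (Fin 3)) :=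
  Subgroup.closure
    {f | ∃ i : Fin 3, ∀ v, f v = v - (2 * ⟪v, r i⟫ / ⟪r i, r i⟫) • r i}

open Pointwise
open scoped QuadraticAlgebra

section ClosureLayers

variable {M : Type*} [Monoid M] [DecidableEq M]

/-- `closureLayers X n` is the pair (products of at most `n` elements of `X`, those among them
that are not products of fewer), computed by breadth-first search. -/
def closureLayers (X : Finset M) : ℕ → Finset M × Finset M
  | 0 => ({1}, {1})
  | n + 1 =>
    let new := (X * (closureLayers X n).2).filter (· ∉ (closureLayers X n).1)
    ((closureLayers X n).1 ∪ new, new)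

variable (X : Finset M)

theorem one_mem_closureLayers_fst : ∀ n, (1 : M) ∈ (closureLayers X n).1
  | 0 => Finset.mem_singleton_self 1
  | n + 1 => Finset.mem_union_left _ (one_mem_closureLayers_fst n)

theorem closureLayers_snd_subset_fst : ∀ n, (closureLayers X n).2 ⊆ (closureLayers X n).1
  | 0 => subset_rfl
  | _ + 1 => Finset.subset_union_right

theorem coe_closureLayers_fst_subset_closure :
    ∀ n, ↑(closureLayers X n).1 ⊆ (Submonoid.closure (X : Set M) : Set M)
  | 0 => by simp [closureLayers]
  | n + 1 => by
    simp only [closureLayers, Finset.coe_union]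
    refine Set.union_subset (coe_closureLayers_fst_subset_closure n) fun y hy => ?_
    obtain ⟨x, hx, z, hz, rfl⟩ := Finset.mem_mul.1 (Finset.mem_filter.1 hy).1
    exact mul_mem (Submonoid.subset_closure hx)
      (coe_closureLayers_fst_subset_closure n (closureLayers_snd_subset_fst X n hz))

theorem mul_mem_closureLayers_fst {x y : M} (hx : x ∈ X) :
    ∀ n, y ∈ (closureLayers X n).1 → y ∉ (closureLayers X n).2 → x * y ∈ (closureLayers X n).1
  | 0, hy, hyF => absurd hy hyF
  | n + 1, hy, hyF => by
    simp only [closureLayers, Finset.mem_union, Finset.mem_filter] at hy hyF ⊢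
    rcases hy with hy | ⟨hmem, hyS⟩
    · by_cases hyF' : y ∈ (closureLayers X n).2
      · by_cases hxy : x * y ∈ (closureLayers X n).1
        · exact .inl hxy
        · exact .inr ⟨Finset.mul_mem_mul hx hyF', hxy⟩
      · exact .inl (mul_mem_closureLayers_fst hx n hy hyF')
    · exact absurd ⟨hmem, hyS⟩ hyF

theorem coe_closure_eq_closureLayers {n : ℕ} (h : (closureLayers X (n + 1)).2 = ∅) :
    (Submonoid.closure (X : Set M) : Set M) = (closureLayers X n).1 := by
  refine subset_antisymm (fun y hy => ?_) (coe_closureLayers_fst_subset_closure X n)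
  induction hy using Submonoid.closure_induction_left with
  | one => exact one_mem_closureLayers_fst X n
  | mul_left x hx y _ hy =>
    by_cases hyF : y ∈ (closureLayers X n).2
    · by_contra hxy
      have : x * y ∈ (closureLayers X (n + 1)).2 :=
        Finset.mem_filter.2 ⟨Finset.mul_mem_mul hx hyF, hxy⟩
      simp [h] at this
    · exact mul_mem_closureLayers_fst X hx n hy hyF

theorem card_closure_eq_card_closureLayers {n : ℕ} (h : (closureLayers X (n + 1)).2 = ∅) :
    Nat.card (Submonoid.closure (X : Set M)) = (closureLayers X n).1.card := by
  rw [← SetLike.coe_sort_coe, coe_closure_eq_closureLayers X h, Nat.card_coe_set_eq,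
    Set.ncard_coe_finset]

end ClosureLayers

theorem Subgroup.closure_toSubmonoid_of_inv_mem {G : Type*} [Group G] {s : Set G}
    (hs : ∀ x ∈ s, x⁻¹ ∈ s) : (Subgroup.closure s).toSubmonoid = Submonoid.closure s := by
  rw [Subgroup.closure_toSubmonoid, Set.union_eq_left.2 fun x hx => by simpa using hs _ hx]

theorem Submonoid.card_map_of_injective {M N F : Type*} [Monoid M] [Monoid N] [FunLike F M N]
    [MonoidHomClass F M N] {f : F} (hf : Function.Injective f) (S : Submonoid M) :
    Nat.card (S.map f) = Nat.card S := by
  rw [← SetLike.coe_sort_coe, Submonoid.coe_map, Nat.card_image_of_injective hf]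
  rfl

theorem Submonoid.card_closure_eq_of_image_eq {M N P : Type*} [Monoid M] [Monoid N] [Monoid P]
    {f : M →* P} {g : N →* P} (hf : Function.Injective f) (hg : Function.Injective g)
    {s : Set M} {t : Set N} (h : f '' s = g '' t) :
    Nat.card (Submonoid.closure s) = Nat.card (Submonoid.closure t) := by
  rw [← Submonoid.card_map_of_injective hf, ← Submonoid.card_map_of_injective hg,
    MonoidHom.map_mclosure, MonoidHom.map_mclosure, h]

section Matrix

variable {ι R : Type*} [Fintype ι] [DecidableEq ι]

def simpleReflectionMatrix [Ring R] (A : Matrix ι ι R) (i : ι) : Matrix ι ι R :=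
  1 - Matrix.single i i 1 * A

theorem simpleReflectionMatrix_apply [Ring R] (A : Matrix ι ι R) (i a j : ι) :
    simpleReflectionMatrix A i a j = (1 : Matrix ι ι R) a j - if a = i then A i j else 0 := by
  rcases eq_or_ne a i with rfl | h
  · simp [simpleReflectionMatrix, Matrix.single_mul_apply_same]
  · simp [simpleReflectionMatrix, h]

theorem RingHom.mapMatrix_simpleReflectionMatrix {S : Type*} [Ring R] [Ring S] (φ : R →+* S)
    (A : Matrix ι ι R) (i : ι) :
    φ.mapMatrix (simpleReflectionMatrix A i) = simpleReflectionMatrix (φ.mapMatrix A) i := by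
  simp [simpleReflectionMatrix, Matrix.map_sub, Matrix.map_mul, Matrix.map_one, Matrix.map_single]

variable {E : Type*} [CommRing R] [SeminormedAddCommGroup E] [Module R E]

def isometryToMatrix (b : Module.Basis ι R E) : (E ≃ₗᵢ[R] E) →* Matrix ι ι R where
  toFun f := LinearMap.toMatrix b b f.toLinearEquiv.toLinearMap
  map_one' := LinearMap.toMatrix_id b
  map_mul' _ _ := LinearMap.toMatrix_mul b _ _

@[simp]
theorem isometryToMatrix_apply (b : Module.Basis ι R E) (f : E ≃ₗᵢ[R] E) :
    isometryToMatrix b f = LinearMap.toMatrix b b f.toLinearEquiv.toLinearMap :=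
  rfl

theorem isometryToMatrix_injective (b : Module.Basis ι R E) :
    Function.Injective (isometryToMatrix b) := fun _ _ h =>
  LinearIsometryEquiv.toLinearEquiv_injective <| LinearEquiv.toLinearMap_injective <|
    (LinearMap.toMatrix b b).injective h

end Matrix

section Reflection

variable {E : Type*} [NormedAddCommGroup E] [InnerProductSpace ℝ E]

theorem reflection_orthogonal_singleton_apply (α v : E) :
    (ℝ ∙ α)ᗮ.reflection v = v - (2 * ⟪v, α⟫ / ⟪α, α⟫) • α := by
  rw [Submodule.reflection_orthogonal_apply, Submodule.reflection_singleton_apply,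
    real_inner_self_eq_norm_sq, real_inner_comm]
  simp only [RCLike.ofReal_real_eq_id, id]
  module

theorem setOf_reflection_eq_range {ι : Type*} (v : ι → E) :
    {f : E ≃ₗᵢ[ℝ] E | ∃ i, ∀ x, f x = x - (2 * ⟪x, v i⟫ / ⟪v i, v i⟫) • v i} =
      Set.range fun i => (ℝ ∙ v i)ᗮ.reflection := by
  ext f
  constructor
  · rintro ⟨i, hf⟩
    exact ⟨i, LinearIsometryEquiv.ext fun x => by rw [hf, reflection_orthogonal_singleton_apply]⟩
  · rintro ⟨i, rfl⟩
    exact ⟨i, reflection_orthogonal_singleton_apply _⟩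

def cartanMatrix {ι : Type*} (v : ι → E) : Matrix ι ι ℝ :=
  Matrix.of fun i j => 2 * ⟪v j, v i⟫ / ⟪v i, v i⟫

theorem isometryToMatrix_reflection {ι : Type*} [Fintype ι] [DecidableEq ι]
    (b : Module.Basis ι ℝ E) (i : ι) :
    isometryToMatrix b (ℝ ∙ b i)ᗮ.reflection = simpleReflectionMatrix (cartanMatrix b) i := by
  ext a j
  rw [isometryToMatrix_apply, LinearMap.toMatrix_apply, simpleReflectionMatrix_apply]
  simp [reflection_orthogonal_singleton_apply, Finsupp.single_apply, Matrix.one_apply,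
    cartanMatrix, eq_comm]

end Reflection

/-- `ℤ[τ]`: `QuadraticAlgebra ℤ 1 1` adjoins to `ℤ` an element `ω` with `ω² = 1 + ω`. -/
abbrev GoldenInt := QuadraticAlgebra ℤ 1 1

theorem τ_sq : τ ^ 2 = τ + 1 := Real.goldenRatio_sq

def goldenEmbedding : GoldenInt →+* ℝ :=
  (QuadraticAlgebra.lift ⟨τ, by rw [one_smul, one_smul, ← sq, τ_sq, add_comm]⟩ :
    GoldenInt →ₐ[ℤ] ℝ).toRingHom

theorem goldenEmbedding_apply (x : GoldenInt) : goldenEmbedding x = x.re + x.im * τ := by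
  simp [goldenEmbedding]

theorem goldenEmbedding_omega : goldenEmbedding ω = τ := by
  simp [goldenEmbedding_apply]

theorem goldenEmbedding_injective : Function.Injective goldenEmbedding := by
  refine (injective_iff_map_eq_zero _).2 fun x hx => ?_
  rw [goldenEmbedding_apply] at hx
  have him : x.im = 0 := by
    by_contra h
    exact (((Real.goldenRatio_irrational.intCast_mul h).intCast_add x.re).ne_zero) hx
  simp only [him, Int.cast_zero, zero_mul, add_zero, Int.cast_eq_zero] at hx
  ext <;> simp [hx, him]

def cartanH3 : Matrix (Fin 3) (Fin 3) GoldenInt :=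
  !![2, -1, 0; -1, 2, -ω; 0, -ω, 2]

theorem inner_r (i j : Fin 3) : ⟪r i, r j⟫ = goldenEmbedding (cartanH3 i j) / 2 := by
  fin_cases i <;> fin_cases j <;>
    simp only [r, cartanH3, PiLp.inner_apply, RCLike.inner_apply, conj_trivial, Fin.sum_univ_three]
    <;> norm_num [Matrix.cons_val_two, map_ofNat goldenEmbedding 2, goldenEmbedding_omega]
    <;> linarith [τ_sq]

theorem cartanMatrix_r : cartanMatrix r = goldenEmbedding.mapMatrix cartanH3 := by
  ext i j
  rw [cartanMatrix, Matrix.of_apply, inner_r, inner_r]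
  fin_cases i <;> fin_cases j <;> norm_num [cartanH3, map_ofNat goldenEmbedding 2] <;> ring

theorem det_gram_r : (Matrix.gram ℝ r).det = (2 - τ) / 4 := by
  simp only [Matrix.det_fin_three, Matrix.gram_apply, inner_r]
  norm_num [cartanH3, Matrix.cons_val_two, map_ofNat goldenEmbedding 2, goldenEmbedding_omega]
  linear_combination (-1 / 4 : ℝ) * τ_sq

theorem linearIndependent_r : LinearIndependent ℝ r := by
  refine Matrix.linearIndependent_of_det_gram_ne_zero (𝕜 := ℝ) ?_
  rw [det_gram_r]
  have : τ < 2 := Real.goldenRatio_lt_two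
  exact div_ne_zero (by linarith) four_ne_zero

def rootBasis : Module.Basis (Fin 3) ℝ (EuclideanSpace ℝ (Fin 3)) :=
  basisOfLinearIndependentOfCardEqFinrank linearIndependent_r (by simp)

theorem coe_rootBasis : ⇑rootBasis = r := coe_basisOfLinearIndependentOfCardEqFinrank _ _

def h3SimpleReflections : Finset (Matrix (Fin 3) (Fin 3) GoldenInt) :=
  Finset.univ.image (simpleReflectionMatrix cartanH3)

theorem closureLayers_h3SimpleReflections :
    (closureLayers h3SimpleReflections 16).2 = ∅ ∧
      (closureLayers h3SimpleReflections 15).1.card = 120 := by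
  decide +kernel

theorem card_closure_h3SimpleReflections :
    Nat.card (Submonoid.closure (h3SimpleReflections : Set (Matrix (Fin 3) (Fin 3) GoldenInt))) =
      120 := by
  rw [card_closure_eq_card_closureLayers _ closureLayers_h3SimpleReflections.1,
    closureLayers_h3SimpleReflections.2]

theorem toSubmonoid_icosGroup :
    IcosGroup.toSubmonoid = Submonoid.closure (Set.range fun i => (ℝ ∙ r i)ᗮ.reflection) := by
  rw [IcosGroup, setOf_reflection_eq_range]
  refine Subgroup.closure_toSubmonoid_of_inv_mem ?_
  rintro _ ⟨i, rfl⟩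
  exact ⟨i, Submodule.reflection_inv⟩

theorem isometryToMatrix_rootBasis_reflection (i : Fin 3) :
    isometryToMatrix rootBasis (ℝ ∙ r i)ᗮ.reflection =
      goldenEmbedding.mapMatrix (simpleReflectionMatrix cartanH3 i) := by
  rw [RingHom.mapMatrix_simpleReflectionMatrix, ← cartanMatrix_r, ← coe_rootBasis]
  exact isometryToMatrix_reflection rootBasis i

theorem isometryToMatrix_image_reflections :
    isometryToMatrix rootBasis '' Set.range (fun i => (ℝ ∙ r i)ᗮ.reflection) =
      (goldenEmbedding.mapMatrix : Matrix (Fin 3) (Fin 3) GoldenInt →+* _).toMonoidHom ''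
        h3SimpleReflections := by
  rw [h3SimpleReflections, Finset.coe_image, Finset.coe_univ, Set.image_univ, ← Set.range_comp,
    ← Set.range_comp]
  exact congrArg Set.range (funext isometryToMatrix_rootBasis_reflection)

/-- The group generated by the three simple reflections of `H₃` has order 120
(it is the full icosahedral group, the Coxeter group `H₃ ≅ A₅ × ℤ₂`). -/
theorem card_icosahedral_reflection_group : Nat.card IcosGroup = 120 :=
  calc Nat.card IcosGroup
      = Nat.card (Submonoid.closure (Set.range fun i => (ℝ ∙ r i)ᗮ.reflection)) := by
        rw [← toSubmonoid_icosGroup]; rfl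
    _ = Nat.card
          (Submonoid.closure (h3SimpleReflections : Set (Matrix (Fin 3) (Fin 3) GoldenInt))) :=
        Submonoid.card_closure_eq_of_image_eq (isometryToMatrix_injective rootBasis)
          (Matrix.map_injective goldenEmbedding_injective) isometryToMatrix_image_reflections
    _ = 120 := card_closure_h3SimpleReflections
end
end

section
/- The eight vectors α₁, α₂, α₃, α₄, α₅ = τα₁, α₆ = τα₂, α₇ = τα₃, α₈ = τα₄ are linearly independent over ℚ (regarding ℝ⁴ as a vector space over ℚ); hence they can serve as the eight simple roots of an E₈ root system. -/
noncomputable section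

/-- The Galois conjugate `σ = (1-√5)/2 = 1 - τ` of the golden ratio. -/
def σ : ℝ := (1 - Real.sqrt 5) / 2

/-- The eight vectors `α₁ = ½(-σ,-τ,0,-1)`, `α₂ = ½(0,-σ,-τ,1)`, `α₃ = ½(0,1,-σ,-τ)`,
`α₄ = ½(0,-1,-σ,τ)` and `α_{i+4} = τ·αᵢ` in Euclidean `ℝ⁴`. -/
def α : Fin 8 → EuclideanSpace ℝ (Fin 4) :=
  ![!₂[-σ / 2, -τ / 2, 0, -1 / 2],
    !₂[0, -σ / 2, -τ / 2, 1 / 2],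
    !₂[0, 1 / 2, -σ / 2, -τ / 2],
    !₂[0, -1 / 2, -σ / 2, τ / 2],
    τ • !₂[-σ / 2, -τ / 2, 0, -1 / 2],
    τ • !₂[0, -σ / 2, -τ / 2, 1 / 2],
    τ • !₂[0, 1 / 2, -σ / 2, -τ / 2],
    τ • !₂[0, -1 / 2, -σ / 2, τ / 2]]

/-!
Since `α_{i+4} = τ • α_i`, a rational relation `∑ aᵢ αᵢ + ∑ bᵢ τ αᵢ = 0` over `i ≤ 4` reads
`∑ (aᵢ + bᵢ τ) αᵢ = 0`. The four `H₄` simple roots `α₁, …, α₄` are linearly independent over `ℝ`,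
so `aᵢ + bᵢ τ = 0`, and the irrationality of `τ` gives `aᵢ = bᵢ = 0`.
-/

open Real

lemma Irrational.linearIndependent_one {x : ℝ} (hx : Irrational x) :
    LinearIndependent ℚ ![1, x] := by
  refine LinearIndependent.pair_iff.2 fun s t hst ↦ ?_
  rw [Rat.smul_one_eq_cast, Rat.smul_def] at hst
  obtain rfl : t = 0 := by
    by_contra ht
    exact ((hx.ratCast_mul ht).ratCast_add s).ne_zero hst
  simpa using hst

def h4SimpleRoot : Fin 4 → EuclideanSpace ℝ (Fin 4) :=
  ![!₂[-σ / 2, -τ / 2, 0, -1 / 2],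
    !₂[0, -σ / 2, -τ / 2, 1 / 2],
    !₂[0, 1 / 2, -σ / 2, -τ / 2],
    !₂[0, -1 / 2, -σ / 2, τ / 2]]

lemma linearIndependent_h4SimpleRoot : LinearIndependent ℝ h4SimpleRoot := by
  rw [Fintype.linearIndependent_iff]
  intro c hc
  have h i := congrArg (fun v : EuclideanSpace ℝ (Fin 4) ↦ v i) hc
  have h0 := h 0
  have h1 := h 1
  have h2 := h 2
  have h3 := h 3
  simp only [h4SimpleRoot, Fin.sum_univ_four, Matrix.cons_val_zero, Matrix.cons_val_one,
    Matrix.cons_val, PiLp.add_apply, PiLp.smul_apply, PiLp.zero_apply, smul_eq_mul, one_div,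
    mul_zero, add_zero, zero_add, mul_eq_zero, div_eq_zero_iff, neg_eq_zero,
    OfNat.ofNat_ne_zero, or_false] at h0 h1 h2 h3
  have hσ : σ ≠ 0 := goldenConj_ne_zero
  have hτσ : τ * σ = -1 := goldenRatio_mul_goldenConj
  have e0 : c 0 = 0 := h0.resolve_right hσ
  -- coordinates 1 and 3 give `c₂ - c₃ = σ c₁` and `c₁ = τ (c₂ - c₃)`, so `c₁ = τσ c₁ = -c₁`
  have e1 : c 1 = 0 := by
    linear_combination h3 + τ * h1 + c 1 / 2 * hτσ + (1 + τ ^ 2) / 2 * e0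
  have e3 : c 3 = 0 := by
    refine (mul_eq_zero.1 ?_).resolve_left hσ
    linear_combination -h2 - σ * h1 - σ * τ / 2 * e0 - (σ ^ 2 + τ) / 2 * e1
  have e2 : c 2 = 0 := by linear_combination 2 * h1 + τ * e0 + σ * e1 + e3
  intro i
  fin_cases i <;> assumption

lemma alpha_comp_finProdFinEquiv :
    α ∘ finProdFinEquiv = fun p : Fin 2 × Fin 4 ↦ ![1, τ] p.1 • h4SimpleRoot p.2 := by
  ext ⟨k, j⟩ : 1
  fin_cases k <;> fin_cases j <;> simp [α, h4SimpleRoot, finProdFinEquiv]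

/-- The eight vectors `α₁, …, α₄, τα₁, …, τα₄` are linearly independent over `ℚ`
(regarding `ℝ⁴` as a `ℚ`-vector space); hence they can serve as the eight simple roots
of an `E₈` root system. -/
theorem alpha_linearIndependent_over_Q : LinearIndependent ℚ α :=
  (linearIndependent_equiv' finProdFinEquiv alpha_comp_finProdFinEquiv).1 <|
    linearIndependent_smul goldenRatio_irrational.linearIndependent_one
      linearIndependent_h4SimpleRoot
end
end
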